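/- arXiv:2605.27783 — 2 statements merged into one kernel-verified Lean document; each statement's English description precedes it below -/
import Mathlib

section
/- By induction on j = k - i: if q^k(τ) satisfies |q^k(τ) - Q| ≤ Cε for all τ and for each i < k the function qⁱ solves (qⁱ)'(τ) + (k-i) qⁱ(τ) = α h_i(τ) with |h_i(τ) - q^{i+1}(τ)| ≤ C δ(τ) where δ(τ) = (τ + ln t₀)/√(t₀ e^τ), then for every i ∈ {1,…,k} there are constants C₁, C₂ such that |qⁱ(τ) - (α^{k-i}/(k-i)!) Q| ≤ C₁ ε + C₂ (1+τ) e^{-τ/2} for all τ ≥ 0. -/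
/-!
Downward induction on `i`. If `q^{i+1}` tends to `L_{i+1} = α^{k-i-1}/(k-i-1)! Q` up to an error
`O(ε) + O((1 + τ) e^{-τ/2})`, then so does `hᵢ`, because `δ(τ) ≤ 2 (1 + τ) e^{-τ/2}`. Multiplying
the equation for `qⁱ` by the integrating factor `e^{(k-i)τ}` and integrating shows that `qⁱ`
tends to `α L_{i+1} / (k - i) = L_i` with an error of the same form: the damping rate `k - i ≥ 1`
exceeds the decay rate `1/2`, so the tail `(1 + τ) e^{-τ/2}` survives the integration.
-/

open Real

lemma div_sqrt_mul_exp_le {t₀ τ : ℝ} (ht₀ : 1 ≤ t₀) (hτ : 0 ≤ τ) :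
    (τ + log t₀) / √(t₀ * exp τ) ≤ 2 * (1 + τ) * exp (-τ / 2) := by
  have hs : 1 ≤ √t₀ := one_le_sqrt.mpr ht₀
  have hlog : log t₀ ≤ 2 * √t₀ := by
    have := log_le_sub_one_of_pos (zero_lt_one.trans_le hs)
    rw [log_sqrt (by linarith)] at this
    linarith
  have hcancel : 2 * (1 + τ) * exp (-τ / 2) * (√t₀ * exp (τ / 2)) = 2 * (1 + τ) * √t₀ := by
    rw [neg_div, exp_neg]
    field_simp
  rw [sqrt_mul (by linarith), ← exp_half, div_le_iff₀ (by positivity), hcancel]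
  nlinarith

lemma cast_sub_mul_pow_div_factorial {k i : ℕ} (h : i < k) (x : ℝ) :
    ((k : ℝ) - i) * (x ^ (k - i) / (k - i).factorial) =
      x * (x ^ (k - (i + 1)) / (k - (i + 1)).factorial) := by
  obtain ⟨n, rfl⟩ : ∃ n, k = i + n + 1 := ⟨k - i - 1, by omega⟩
  rw [show i + n + 1 - i = n + 1 by omega, show i + n + 1 - (i + 1) = n by omega,
    Nat.factorial_succ, pow_succ]
  push_cast
  field_simp
  ring

lemma exp_mul_abs_sub_le_of_hasDerivAt_sub_mul {q f : ℝ → ℝ} {m L B₁ B₂ : ℝ} (hm : 1 ≤ m)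
    (hB₂ : 0 ≤ B₂) (hq : ∀ τ, 0 ≤ τ → HasDerivAt q (f τ - m * q τ) τ)
    (hf : ∀ τ, 0 ≤ τ → |f τ - m * L| ≤ B₁ + B₂ * (1 + τ) * exp (-τ / 2))
    {τ : ℝ} (hτ : 0 ≤ τ) :
    exp (m * τ) * |q τ - L| ≤ |q 0 - L| + B₁ / m * (exp (m * τ) - 1) +
      2 * B₂ * ((1 + τ) * exp ((m - 1 / 2) * τ) - 1) := by
  set c := m - 1 / 2 with hc_def
  -- `g = e^{ms} (q - L)` has `g' = e^{ms} (f - mL)`, and `|g'| ≤ Φ'` with `Φ 0 = |g 0|`.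
  set g := fun s => exp (m * s) * (q s - L)
  set Φ := fun s => |q 0 - L| + B₁ / m * (exp (m * s) - 1) + 2 * B₂ * ((1 + s) * exp (c * s) - 1)
  have hg : ∀ s, 0 ≤ s → HasDerivAt g (exp (m * s) * (f s - m * L)) s := fun s hs => by
    refine (((hasDerivAt_id s).const_mul m).exp.mul ((hq s hs).sub_const L)).congr_deriv ?_
    simp only [id, mul_one]
    ring
  have hΦ : ∀ s, HasDerivAt Φ
      (B₁ * exp (m * s) + 2 * B₂ * (exp (c * s) + c * (1 + s) * exp (c * s))) s := fun s => by
    have hm0 : m ≠ 0 := by linarith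
    refine (((((hasDerivAt_id s).const_mul m).exp.sub_const 1).const_mul (B₁ / m)).const_add
      |q 0 - L|).add ((((hasDerivAt_id s).const_add 1).mul
        ((hasDerivAt_id s).const_mul c).exp).sub_const 1 |>.const_mul (2 * B₂)) |>.congr_deriv ?_
    simp only [id, mul_one, one_mul]
    field_simp
  have hbound : ∀ s, 0 ≤ s → |exp (m * s) * (f s - m * L)| ≤
      B₁ * exp (m * s) + 2 * B₂ * (exp (c * s) + c * (1 + s) * exp (c * s)) := fun s hs => by
    have hsplit : exp (m * s) * exp (-s / 2) = exp (c * s) := by rw [← exp_add, hc_def]; ring_nf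
    have hdecay : 0 ≤ B₂ * ((1 + s) * exp (c * s)) := by positivity
    rw [abs_mul, abs_of_pos (exp_pos _)]
    calc _ ≤ exp (m * s) * (B₁ + B₂ * (1 + s) * exp (-s / 2)) :=
          mul_le_mul_of_nonneg_left (hf s hs) (exp_pos _).le
      _ = B₁ * exp (m * s) + B₂ * ((1 + s) * exp (c * s)) := by rw [← hsplit]; ring
      _ ≤ _ := by nlinarith [exp_pos (c * s)]
  have hfence : ‖g τ‖ ≤ Φ τ :=
    image_norm_le_of_norm_deriv_right_le_deriv_boundary
      (fun s hs => (hg s hs.1).continuousAt.continuousWithinAt)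
      (fun s hs => (hg s hs.1).hasDerivWithinAt) (by simp [g, Φ]) hΦ
      (fun s hs => hbound s hs.1) ⟨hτ, le_rfl⟩
  simpa only [g, Real.norm_eq_abs, abs_mul, abs_of_pos (exp_pos _)] using hfence

lemma abs_sub_le_of_hasDerivAt_sub_mul {q f : ℝ → ℝ} {m L B₁ B₂ : ℝ} (hm : 1 ≤ m)
    (hB₁ : 0 ≤ B₁) (hB₂ : 0 ≤ B₂)
    (hq : ∀ τ, 0 ≤ τ → HasDerivAt q (f τ - m * q τ) τ)
    (hf : ∀ τ, 0 ≤ τ → |f τ - m * L| ≤ B₁ + B₂ * (1 + τ) * exp (-τ / 2))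
    {τ : ℝ} (hτ : 0 ≤ τ) :
    |q τ - L| ≤ B₁ / m + (|q 0 - L| + 2 * B₂) * (1 + τ) * exp (-τ / 2) := by
  have hsplit : exp (-τ / 2) * exp (m * τ) = exp ((m - 1 / 2) * τ) := by
    rw [← exp_add]; ring_nf
  have hgrowth : 1 ≤ (1 + τ) * exp ((m - 1 / 2) * τ) :=
    one_le_mul_of_one_le_of_one_le (by linarith) (one_le_exp (mul_nonneg (by linarith) hτ))
  have hB₁m : 0 ≤ B₁ / m := div_nonneg hB₁ (by linarith)
  rw [← mul_le_mul_iff_right₀ (exp_pos (m * τ))]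
  calc exp (m * τ) * |q τ - L|
      ≤ |q 0 - L| + B₁ / m * (exp (m * τ) - 1) +
          2 * B₂ * ((1 + τ) * exp ((m - 1 / 2) * τ) - 1) :=
        exp_mul_abs_sub_le_of_hasDerivAt_sub_mul hm hB₂ hq hf hτ
    _ ≤ |q 0 - L| * ((1 + τ) * exp ((m - 1 / 2) * τ)) + B₁ / m * exp (m * τ) +
          2 * B₂ * ((1 + τ) * exp ((m - 1 / 2) * τ)) := by
        nlinarith [abs_nonneg (q 0 - L)]
    _ = _ := by rw [← hsplit]; ring

def ApproxWithDecay (ε : ℝ) (u : ℝ → ℝ) (L : ℝ) : Prop :=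
  ∃ C₁ C₂ : ℝ, 0 ≤ C₁ ∧ 0 ≤ C₂ ∧
    ∀ τ, 0 ≤ τ → |u τ - L| ≤ C₁ * ε + C₂ * (1 + τ) * exp (-τ / 2)

namespace ApproxWithDecay

variable {ε L : ℝ} {u : ℝ → ℝ}

lemma of_abs_sub_le {C : ℝ} (hC : 0 ≤ C) (h : ∀ τ, 0 ≤ τ → |u τ - L| ≤ C * ε) :
    ApproxWithDecay ε u L :=
  ⟨C, 0, hC, le_rfl, fun τ hτ => by simpa using h τ hτ⟩

lemma const_mul (a : ℝ) (hu : ApproxWithDecay ε u L) :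
    ApproxWithDecay ε (fun τ => a * u τ) (a * L) := by
  obtain ⟨C₁, C₂, hC₁, hC₂, hb⟩ := hu
  refine ⟨|a| * C₁, |a| * C₂, by positivity, by positivity, fun τ hτ => ?_⟩
  calc |a * u τ - a * L| = |a| * |u τ - L| := by rw [← mul_sub, abs_mul]
    _ ≤ |a| * (C₁ * ε + C₂ * (1 + τ) * exp (-τ / 2)) :=
        mul_le_mul_of_nonneg_left (hb τ hτ) (abs_nonneg a)
    _ = |a| * C₁ * ε + |a| * C₂ * (1 + τ) * exp (-τ / 2) := by ring

lemma of_abs_sub_le_decay {v : ℝ → ℝ} {C : ℝ} (hv : ApproxWithDecay ε v L) (hC : 0 ≤ C)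
    (h : ∀ τ, 0 ≤ τ → |u τ - v τ| ≤ C * (1 + τ) * exp (-τ / 2)) :
    ApproxWithDecay ε u L := by
  obtain ⟨C₁, C₂, hC₁, hC₂, hb⟩ := hv
  refine ⟨C₁, C + C₂, hC₁, by positivity, fun τ hτ => ?_⟩
  calc |u τ - L| ≤ |u τ - v τ| + |v τ - L| := abs_sub_le _ _ _
    _ ≤ C * (1 + τ) * exp (-τ / 2) + (C₁ * ε + C₂ * (1 + τ) * exp (-τ / 2)) :=
        add_le_add (h τ hτ) (hb τ hτ)
    _ = C₁ * ε + (C + C₂) * (1 + τ) * exp (-τ / 2) := by ring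

lemma of_hasDerivAt {q f : ℝ → ℝ} {m : ℝ} (hε : 0 ≤ ε) (hm : 1 ≤ m)
    (hq : ∀ τ, 0 ≤ τ → HasDerivAt q (f τ - m * q τ) τ) (hf : ApproxWithDecay ε f (m * L)) :
    ApproxWithDecay ε q L := by
  obtain ⟨C₁, C₂, hC₁, hC₂, hb⟩ := hf
  refine ⟨C₁ / m, |q 0 - L| + 2 * C₂, div_nonneg hC₁ (by linarith), by positivity,
    fun τ hτ => ?_⟩
  rw [div_mul_eq_mul_div]
  exact abs_sub_le_of_hasDerivAt_sub_mul hm (mul_nonneg hC₁ hε) hC₂ hq hb hτ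

end ApproxWithDecay

theorem stmt_8_general (k : ℕ) (α ε t₀ Q C : ℝ)
    (hε : 0 ≤ ε) (ht₀ : 1 ≤ t₀) (hC : 0 < C)
    (q h : ℕ → ℝ → ℝ)
    (hqk : ∀ τ : ℝ, 0 ≤ τ → |q k τ - Q| ≤ C * ε)
    (hode : ∀ i, 1 ≤ i → i < k → ∀ τ : ℝ, 0 ≤ τ →
      HasDerivAt (q i) (α * h i τ - ((k : ℝ) - i) * q i τ) τ)
    (hh : ∀ i, 1 ≤ i → i < k → ∀ τ : ℝ, 0 ≤ τ →
      |h i τ - q (i + 1) τ| ≤ C * ((τ + Real.log t₀) / Real.sqrt (t₀ * Real.exp τ))) :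
    ∀ i, 1 ≤ i → i ≤ k → ∃ C₁ C₂ : ℝ, ∀ τ : ℝ, 0 ≤ τ →
      |q i τ - (α ^ (k - i) / (Nat.factorial (k - i)) : ℝ) * Q| ≤
        C₁ * ε + C₂ * (1 + τ) * Real.exp (-τ / 2) := by
  intro i hi hik
  suffices ApproxWithDecay ε (q i) (α ^ (k - i) / (k - i).factorial * Q) by
    obtain ⟨C₁, C₂, -, -, hb⟩ := this
    exact ⟨C₁, C₂, hb⟩
  induction hik using Nat.decreasingInduction with
  | self => simpa using ApproxWithDecay.of_abs_sub_le hC.le hqk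
  | of_succ i hik ih =>
    have hm : 1 ≤ (k : ℝ) - i := by
      have : (i : ℝ) + 1 ≤ k := by exact_mod_cast hik
      linarith
    have hhi : ApproxWithDecay ε (h i) (α ^ (k - (i + 1)) / (k - (i + 1)).factorial * Q) :=
      (ih (by omega)).of_abs_sub_le_decay (C := 2 * C) (by positivity) fun τ hτ => by
        have := mul_le_mul_of_nonneg_left (div_sqrt_mul_exp_le ht₀ hτ) hC.le
        linarith [hh i hi hik τ hτ]
    have hf : ApproxWithDecay ε (fun τ => α * h i τ)
        (((k : ℝ) - i) * (α ^ (k - i) / (k - i).factorial * Q)) := by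
      rw [← mul_assoc, cast_sub_mul_pow_div_factorial hik, mul_assoc]
      exact hhi.const_mul α
    exact hf.of_hasDerivAt hε hm (hode i hi hik)

/-- induction on the cascading components: if `|q^k(τ) - Q| ≤ Cε` and for
`1 ≤ i < k` the function `qⁱ` solves `(qⁱ)' + (k-i)qⁱ = α hᵢ` with
`|hᵢ(τ) - q^{i+1}(τ)| ≤ C δ(τ)`, `δ(τ) = (τ + ln t₀)/√(t₀ e^τ)`, then for every
`1 ≤ i ≤ k` there are constants `C₁, C₂` with
`|qⁱ(τ) - (α^{k-i}/(k-i)!) Q| ≤ C₁ε + C₂(1+τ)e^{-τ/2}` for all `τ ≥ 0`. -/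
theorem stmt_8 (k : ℕ) (hk : 1 ≤ k) (α ε t₀ Q C : ℝ)
    (hα : 0 < α) (hε : 0 ≤ ε) (ht₀ : 1 ≤ t₀) (hC : 0 < C)
    (q h : ℕ → ℝ → ℝ)
    (hqk : ∀ τ : ℝ, 0 ≤ τ → |q k τ - Q| ≤ C * ε)
    (hcont : ∀ i, 1 ≤ i → i < k → Continuous (h i))
    (hode : ∀ i, 1 ≤ i → i < k → ∀ τ : ℝ, 0 ≤ τ →
      HasDerivAt (q i) (α * h i τ - ((k : ℝ) - i) * q i τ) τ)
    (hh : ∀ i, 1 ≤ i → i < k → ∀ τ : ℝ, 0 ≤ τ →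
      |h i τ - q (i + 1) τ| ≤ C * ((τ + Real.log t₀) / Real.sqrt (t₀ * Real.exp τ))) :
    ∀ i, 1 ≤ i → i ≤ k → ∃ C₁ C₂ : ℝ, ∀ τ : ℝ, 0 ≤ τ →
      |q i τ - (α ^ (k - i) / (Nat.factorial (k - i)) : ℝ) * Q| ≤
        C₁ * ε + C₂ * (1 + τ) * Real.exp (-τ / 2) :=
  stmt_8_general k α ε t₀ Q C hε ht₀ hC q h hqk hode hh
end

section
/- Let γ ∈ (0,1/3), δ > 0, λ > 0 small, and define s̄(t,x) = t^{-λ} cos(x/t^{γ+δ}) for |x| ≤ t^γ. There exist constants c₁, c₂ > 0 with c₁ t^{-λ} ≤ s̄(t,x) ≤ c₂ t^{-λ} for all t ≥ 1 and |x| ≤ t^γ, and moreover s̄_t - s̄_{xx} ≥ (t^{-2(γ+δ)} - (λ + C t^{-δ}) t^{-1}) s̄(t,x) for all t ≥ 1 and |x| ≤ t^γ, where C depends only on γ, δ. In particular, if δ and λ are small enough (so that 2(γ+δ) < 1), then for all sufficiently large t, s̄_t - s̄_{xx} ≥ (1/2) t^{-2(γ+δ)} s̄(t,x). -/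
/-!
Write `u = x / t ^ (γ + δ)`. On the region `t ≥ 1`, `|x| ≤ t ^ γ` we have `|u| ≤ 1`, so
`cos 1 ≤ cos u ≤ 1`. Differentiating,
`s̄_t - s̄_xx = (t^{-2(γ+δ)} - λ t^{-1}) s̄ + (γ + δ) t^{-λ-1} u sin u`,
and the last term is nonnegative because `|u| ≤ π`, so the estimate holds with `C = 0`.
When `2(γ+δ) < 1`, `λ t^{-1}` is eventually at most half of `t^{-2(γ+δ)}`, and `s̄ ≥ 0`.
-/

open Real Filter

theorem Real.mul_sin_nonneg_of_abs_le_pi {u : ℝ} (hu : |u| ≤ π) : 0 ≤ u * sin u := by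
  rcases le_total 0 u with h | h
  · exact mul_nonneg h (sin_nonneg_of_nonneg_of_le_pi h (le_of_abs_le hu))
  · exact mul_nonneg_of_nonpos_of_nonpos h
      (sin_nonpos_of_nonpos_of_neg_pi_le h (neg_le_of_abs_le hu))

theorem Real.cos_one_le_cos_of_abs_le_one {u : ℝ} (hu : |u| ≤ 1) : cos 1 ≤ cos u := by
  rw [← cos_abs u]
  exact cos_le_cos_of_nonneg_of_le_pi (abs_nonneg u) (by linarith [pi_gt_three]) hu

theorem abs_div_rpow_le_one {γ a t x : ℝ} (ht : 1 ≤ t) (hγa : γ ≤ a) (hx : |x| ≤ t ^ γ) :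
    |x / t ^ a| ≤ 1 := by
  have hta : 0 < t ^ a := rpow_pos_of_pos (by linarith) a
  rw [abs_div, abs_of_pos hta, div_le_one hta]
  exact hx.trans (rpow_le_rpow_of_exponent_le ht hγa)

noncomputable def supersolution (lam a t x : ℝ) : ℝ := t ^ (-lam) * cos (x / t ^ a)

theorem hasDerivAt_supersolution_time (lam a x : ℝ) {t : ℝ} (ht : 0 < t) :
    HasDerivAt (fun s => supersolution lam a s x)
      (t ^ (-lam - 1) * (a * (x / t ^ a) * sin (x / t ^ a) - lam * cos (x / t ^ a))) t := by
  have hpow (b : ℝ) : HasDerivAt (fun s : ℝ => s ^ b) (b * t ^ (b - 1)) t :=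
    hasDerivAt_rpow_const (Or.inl ht.ne')
  have hta : t ^ a ≠ 0 := (rpow_pos_of_pos ht a).ne'
  refine ((hpow (-lam)).mul (((hasDerivAt_const t x).div (hpow a) hta).cos)).congr_deriv ?_
  rw [Pi.div_apply, rpow_sub_one ht.ne', rpow_sub_one ht.ne']
  field_simp
  ring

theorem deriv_deriv_const_mul_cos_div (c b x : ℝ) :
    deriv (deriv fun y => c * cos (y / b)) x = -(b ^ 2)⁻¹ * (c * cos (x / b)) := by
  have hdiv (y : ℝ) : HasDerivAt (fun y => y / b) b⁻¹ y := by
    simpa [div_eq_mul_inv] using (hasDerivAt_id y).div_const b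
  have hfirst : deriv (fun y => c * cos (y / b)) = fun y => -(c * b⁻¹) * sin (y / b) := by
    funext y
    rw [((hdiv y).cos.const_mul c).deriv]
    ring
  rw [hfirst, ((hdiv x).sin.const_mul _).deriv]
  ring

theorem supersolution_heat_ge {lam a t x : ℝ} (ha : 0 ≤ a) (ht : 0 < t) (hu : |x / t ^ a| ≤ π) :
    deriv (fun s => supersolution lam a s x) t - deriv (deriv fun y => supersolution lam a t y) x
      ≥ (t ^ (-(2 * a)) - lam * t ^ (-1 : ℝ)) * supersolution lam a t x := by
  have hspace : deriv (deriv fun y => supersolution lam a t y) x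
      = -((t ^ a) ^ 2)⁻¹ * supersolution lam a t x :=
    deriv_deriv_const_mul_cos_div _ _ x
  have hdrift : 0 ≤ t ^ (-lam - 1) * a * ((x / t ^ a) * sin (x / t ^ a)) :=
    mul_nonneg (mul_nonneg (rpow_nonneg ht.le _) ha) (mul_sin_nonneg_of_abs_le_pi hu)
  have hexp : t ^ (-(2 * a)) = ((t ^ a) ^ 2)⁻¹ := by
    rw [rpow_neg ht.le, mul_comm, rpow_mul ht.le, rpow_two]
  have hsplit : deriv (fun s => supersolution lam a s x) t
      - deriv (deriv fun y => supersolution lam a t y) x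
      = (t ^ (-(2 * a)) - lam * t ^ (-1 : ℝ)) * supersolution lam a t x
        + t ^ (-lam - 1) * a * ((x / t ^ a) * sin (x / t ^ a)) := by
    rw [(hasDerivAt_supersolution_time lam a x ht).deriv, hspace, hexp, rpow_neg_one,
      rpow_sub_one ht.ne', supersolution]
    ring
  linarith

theorem eventually_mul_rpow_neg_one_le {a : ℝ} (ha : 2 * a < 1) (lam : ℝ) :
    ∀ᶠ t in atTop, lam * t ^ (-1 : ℝ) ≤ 1 / 2 * t ^ (-(2 * a)) := by
  have hsmall : ∀ᶠ t in atTop, lam * t ^ (-(1 - 2 * a)) < 1 / 2 := by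
    have := ((tendsto_rpow_neg_atTop (sub_pos.mpr ha)).const_mul lam)
    rw [mul_zero] at this
    exact this.eventually (gt_mem_nhds one_half_pos)
  filter_upwards [hsmall, eventually_gt_atTop 0] with t hlt ht
  have hsplit : t ^ (-1 : ℝ) = t ^ (-(1 - 2 * a)) * t ^ (-(2 * a)) := by
    rw [← rpow_add ht]; ring_nf
  rw [hsplit, ← mul_assoc]
  exact mul_le_mul_of_nonneg_right hlt.le (rpow_nonneg ht.le _)

theorem stmt_16_general (γ δ lam : ℝ) (hγ : γ ∈ Set.Ioo (0 : ℝ) (1 / 3)) (hδ : 0 < δ) :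
    (let sbar : ℝ → ℝ → ℝ := fun t x => t ^ (-lam) * Real.cos (x / t ^ (γ + δ))
    (∃ c₁ > 0, ∃ c₂ > 0, ∀ t : ℝ, 1 ≤ t → ∀ x : ℝ, |x| ≤ t ^ γ →
      c₁ * t ^ (-lam) ≤ sbar t x ∧ sbar t x ≤ c₂ * t ^ (-lam)) ∧
    (∃ C : ℝ, ∀ t : ℝ, 1 ≤ t → ∀ x : ℝ, |x| ≤ t ^ γ →
      deriv (fun s => sbar s x) t - deriv (deriv (fun y => sbar t y)) x ≥
        (t ^ (-(2 * (γ + δ))) - (lam + C * t ^ (-δ)) * t ^ (-1 : ℝ)) * sbar t x) ∧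
    (2 * (γ + δ) < 1 → ∃ T : ℝ, ∀ t : ℝ, T ≤ t → ∀ x : ℝ, |x| ≤ t ^ γ →
      deriv (fun s => sbar s x) t - deriv (deriv (fun y => sbar t y)) x ≥
        (1 / 2) * t ^ (-(2 * (γ + δ))) * sbar t x)) := by
  intro sbar
  have hγa : γ ≤ γ + δ := by linarith
  have hcos {t x : ℝ} (ht : 1 ≤ t) (hx : |x| ≤ t ^ γ) : cos 1 ≤ cos (x / t ^ (γ + δ)) :=
    cos_one_le_cos_of_abs_le_one (abs_div_rpow_le_one ht hγa hx)
  have hheat {t x : ℝ} (ht : 1 ≤ t) (hx : |x| ≤ t ^ γ) :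
      deriv (fun s => sbar s x) t - deriv (deriv (fun y => sbar t y)) x ≥
        (t ^ (-(2 * (γ + δ))) - lam * t ^ (-1 : ℝ)) * sbar t x :=
    supersolution_heat_ge (by linarith [hγ.1]) (by linarith)
      ((abs_div_rpow_le_one ht hγa hx).trans (by linarith [pi_gt_three]))
  refine ⟨⟨cos 1, cos_one_pos, 1, one_pos, fun t ht x hx => ?_⟩,
    ⟨0, fun t ht x hx => by simpa using hheat ht hx⟩, fun hγδ => ?_⟩
  · have hpow : 0 < t ^ (-lam) := rpow_pos_of_pos (by linarith) _
    exact ⟨by nlinarith [hcos ht hx], by nlinarith [cos_le_one (x / t ^ (γ + δ))]⟩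
  · obtain ⟨T, hT⟩ := eventually_atTop.mp
      ((eventually_ge_atTop 1).and (eventually_mul_rpow_neg_one_le hγδ lam))
    refine ⟨T, fun t htT x hx => ?_⟩
    obtain ⟨ht, hcoef⟩ := hT t htT
    have hsbar : 0 ≤ sbar t x :=
      mul_nonneg (rpow_nonneg (by linarith) _) (cos_one_pos.le.trans (hcos ht hx))
    exact le_trans (mul_le_mul_of_nonneg_right (by linarith) hsbar) (hheat ht hx)

/-- for `γ ∈ (0,1/3)`, `δ, λ > 0`, the function
`s̄(t,x) = t^{-λ} cos(x/t^{γ+δ})` satisfies `c₁ t^{-λ} ≤ s̄ ≤ c₂ t^{-λ}` on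
`{t ≥ 1, |x| ≤ t^γ}`, and `s̄_t - s̄_{xx} ≥ (t^{-2(γ+δ)} - (λ + C t^{-δ})t^{-1}) s̄` there;
in particular if `2(γ+δ) < 1` then `s̄_t - s̄_{xx} ≥ (1/2) t^{-2(γ+δ)} s̄` for all
sufficiently large `t` and `|x| ≤ t^γ`. -/
theorem stmt_16 (γ δ lam : ℝ) (hγ : γ ∈ Set.Ioo (0 : ℝ) (1 / 3)) (hδ : 0 < δ)
    (hlam : 0 < lam) :
    (let sbar : ℝ → ℝ → ℝ := fun t x => t ^ (-lam) * Real.cos (x / t ^ (γ + δ))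
    (∃ c₁ > 0, ∃ c₂ > 0, ∀ t : ℝ, 1 ≤ t → ∀ x : ℝ, |x| ≤ t ^ γ →
      c₁ * t ^ (-lam) ≤ sbar t x ∧ sbar t x ≤ c₂ * t ^ (-lam)) ∧
    (∃ C : ℝ, ∀ t : ℝ, 1 ≤ t → ∀ x : ℝ, |x| ≤ t ^ γ →
      deriv (fun s => sbar s x) t - deriv (deriv (fun y => sbar t y)) x ≥
        (t ^ (-(2 * (γ + δ))) - (lam + C * t ^ (-δ)) * t ^ (-1 : ℝ)) * sbar t x) ∧
    (2 * (γ + δ) < 1 → ∃ T : ℝ, ∀ t : ℝ, T ≤ t → ∀ x : ℝ, |x| ≤ t ^ γ →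
      deriv (fun s => sbar s x) t - deriv (deriv (fun y => sbar t y)) x ≥
        (1 / 2) * t ^ (-(2 * (γ + δ))) * sbar t x)) :=
  stmt_16_general γ δ lam hγ hδ
end
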